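/- Let F = f + g with f convex differentiable with L-Lipschitz gradient and g proper closed convex, and suppose F attains its minimum F* at x*. The accelerated proximal gradient method (with stepsize 1/L, momentum coefficients t_k satisfying t₀ = 1, t_k = (1 + √(1 + 4t_{k−1}²))/2, and extrapolation y_{k+1} = x_k + ((t_{k−1} − 1)/t_k)(x_k − x_{k−1})) produces iterates satisfying F(x_k) − F* ≤ 2L‖x₀ − x*‖²/(k+1)² for all k ≥ 1. -/

import Mathlib

/-!
Each proximal gradient step `y ↦ x⁺` satisfies `F x⁺ ≤ F z + L/2 (‖z - y‖² - ‖z - x⁺‖²)` for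
every `z` in the domain of `g`: the descent lemma bounds `f x⁺` by the quadratic model of `f` at
`y`, this model plus `g` is `L`-strongly convex and minimised at `x⁺`, and convexity of `f` bounds
its linear part by `f z`. Adding these inequalities at `z = x_k` and `z = x*` with weights
`t_k (t_k - 1)` and `t_k`, and using `t_k² - t_k = t_{k-1}²`, shows that the energy
`2/L t_{k-1}² (F x_k - F*) + ‖t_{k-1} x_k - (t_{k-1} - 1) x_{k-1} - x*‖²` does not increase.
It starts below `‖x₀ - x*‖²`, and `t_{k-1} ≥ (k + 1)/2`.
-/

open RealInnerProductSpace Set Filter Topology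

theorem convexOn_toReal_of_ne_bot {V : Type*} [AddCommGroup V] [Module ℝ V] {g : V → EReal}
    (hg_ne_bot : ∀ x, g x ≠ ⊥)
    (hg_conv : ∀ x y, ∀ a b : ℝ, 0 ≤ a → 0 ≤ b → a + b = 1 →
      g (a • x + b • y) ≤ (a : EReal) * g x + (b : EReal) * g y) :
    ConvexOn ℝ {x | g x ≠ ⊤} fun x => (g x).toReal := by
  have hcomb : ∀ x, g x ≠ ⊤ → ∀ y, g y ≠ ⊤ → ∀ a b : ℝ, 0 ≤ a → 0 ≤ b → a + b = 1 →
      g (a • x + b • y) ≤ ((a * (g x).toReal + b * (g y).toReal : ℝ) : EReal) := by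
    intro x hx y hy a b ha hb hab
    rw [EReal.coe_add, EReal.coe_mul, EReal.coe_mul, EReal.coe_toReal hx (hg_ne_bot x),
      EReal.coe_toReal hy (hg_ne_bot y)]
    exact hg_conv x y a b ha hb hab
  refine ⟨fun x hx y hy a b ha hb hab => ?_, fun x hx y hy a b ha hb hab => ?_⟩
  · exact ne_top_of_le_ne_top (EReal.coe_ne_top _) (hcomb x hx y hy a b ha hb hab)
  · have h := EReal.toReal_le_toReal (hcomb x hx y hy a b ha hb hab) (hg_ne_bot _)
      (EReal.coe_ne_top _)
    rwa [EReal.toReal_coe] at h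

theorem momentum_succ_sq_sub_self {t : ℕ → ℝ}
    (htrec : ∀ k, t (k + 1) = (1 + √(1 + 4 * t k ^ 2)) / 2) (k : ℕ) :
    t (k + 1) ^ 2 - t (k + 1) = t k ^ 2 := by
  rw [htrec]
  linear_combination (1 / 4 : ℝ) * Real.sq_sqrt (by positivity : (0 : ℝ) ≤ 1 + 4 * t k ^ 2)

theorem add_two_div_two_le_momentum {t : ℕ → ℝ} (ht0 : t 0 = 1)
    (htrec : ∀ k, t (k + 1) = (1 + √(1 + 4 * t k ^ 2)) / 2) (k : ℕ) :
    ((k : ℝ) + 2) / 2 ≤ t k := by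
  induction k with
  | zero => simp [ht0]
  | succ k ih =>
    have hsqrt : 2 * t k ≤ √(1 + 4 * t k ^ 2) := Real.le_sqrt_of_sq_le (by nlinarith)
    rw [htrec]
    push_cast
    linarith

section InnerProductSpace

variable {E : Type*} [NormedAddCommGroup E] [InnerProductSpace ℝ E]

theorem HasGradientAt.hasDerivAt_add_smul [CompleteSpace E] {f : E → ℝ} {f'a a v : E} {r : ℝ}
    (h : HasGradientAt f f'a (a + r • v)) :
    HasDerivAt (fun ρ : ℝ => f (a + ρ • v)) ⟪f'a, v⟫ r := by
  have hline : HasDerivAt (fun ρ : ℝ => a + ρ • v) v r := by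
    simpa using ((hasDerivAt_id r).smul_const v).const_add a
  exact h.hasFDerivAt.comp_hasDerivAt r hline

theorem ConvexOn.add_inner_gradient_le [CompleteSpace E] {f : E → ℝ} {s : Set E} {a b f'a : E}
    (hf : ConvexOn ℝ s f) (ha : a ∈ s) (hb : b ∈ s) (h : HasGradientAt f f'a a) :
    f a + ⟪f'a, b - a⟫ ≤ f b := by
  have hline : ConvexOn ℝ (AffineMap.lineMap a b ⁻¹' s) (fun r : ℝ => f (a + r • (b - a))) := by
    have heq : f ∘ AffineMap.lineMap a b = fun r : ℝ => f (a + r • (b - a)) := by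
      ext r
      simp [AffineMap.lineMap_apply_module', add_comm]
    exact heq ▸ hf.comp_affineMap (AffineMap.lineMap a b)
  have hderiv := HasGradientAt.hasDerivAt_add_smul (v := b - a) (r := 0) (by simpa using h)
  have hslope := hline.le_slope_of_hasDerivAt (by simpa using ha) (by simpa using hb) one_pos hderiv
  simp only [slope_def_field, one_smul, add_sub_cancel, zero_smul, add_zero, sub_zero, div_one]
    at hslope
  linarith

theorem le_add_inner_gradient_add_sq [CompleteSpace E] {f : E → ℝ} {f' : E → E} {L : ℝ}
    (hf : ∀ x, HasGradientAt f (f' x) x) (hlip : ∀ x y, ‖f' x - f' y‖ ≤ L * ‖x - y‖) (a b : E) :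
    f b ≤ f a + ⟪f' a, b - a⟫ + L / 2 * ‖b - a‖ ^ 2 := by
  set v := b - a
  set ψ : ℝ → ℝ := fun r => f (a + r • v) - r * ⟪f' a, v⟫ - L / 2 * r ^ 2 * ‖v‖ ^ 2
  have hψ : ∀ r, HasDerivAt ψ (⟪f' (a + r • v), v⟫ - ⟪f' a, v⟫ - L * r * ‖v‖ ^ 2) r := by
    intro r
    have hquad := ((hasDerivAt_pow 2 r).const_mul (L / 2)).mul_const (‖v‖ ^ 2)
    have hlin := (hasDerivAt_id r).mul_const ⟪f' a, v⟫
    refine (((hf (a + r • v)).hasDerivAt_add_smul.sub hlin).sub hquad).congr_deriv ?_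
    simp only [one_mul]; push_cast; ring
  have hψ' : ∀ r ∈ interior (Icc (0 : ℝ) 1),
      ⟪f' (a + r • v), v⟫ - ⟪f' a, v⟫ - L * r * ‖v‖ ^ 2 ≤ 0 := by
    rw [interior_Icc]
    rintro r ⟨hr0, -⟩
    rw [← inner_sub_left, sub_nonpos]
    calc ⟪f' (a + r • v) - f' a, v⟫ ≤ ‖f' (a + r • v) - f' a‖ * ‖v‖ := real_inner_le_norm _ _
      _ ≤ L * ‖r • v‖ * ‖v‖ := by gcongr; simpa using hlip (a + r • v) a
      _ = L * r * ‖v‖ ^ 2 := by rw [norm_smul, Real.norm_of_nonneg hr0.le]; ring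
  have hanti : AntitoneOn ψ (Icc 0 1) :=
    antitoneOn_of_hasDerivWithinAt_nonpos (convex_Icc 0 1)
      (fun r _ => (hψ r).continuousAt.continuousWithinAt) (fun r _ => (hψ r).hasDerivWithinAt) hψ'
  have hψ10 := hanti (left_mem_Icc.2 zero_le_one) (right_mem_Icc.2 zero_le_one) zero_le_one
  simp only [ψ, v, zero_smul, add_zero, one_smul, add_sub_cancel] at hψ10
  linarith

theorem StrongConvexOn.add_sq_le_of_isMinOn {s : Set E} {m : ℝ} {φ : E → ℝ} {x z : E}
    (hφ : StrongConvexOn s m φ) (hmin : IsMinOn φ s x) (hx : x ∈ s) (hz : z ∈ s) :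
    φ x + m / 2 * ‖z - x‖ ^ 2 ≤ φ z := by
  have hsegment : ∀ r ∈ Ioo (0 : ℝ) 1, φ x + (1 - r) * (m / 2 * ‖z - x‖ ^ 2) ≤ φ z := by
    rintro r ⟨hr0, hr1⟩
    have hmid := hφ.2 hx hz (sub_nonneg.2 hr1.le) hr0.le (sub_add_cancel 1 r)
    have hle : φ x ≤ φ ((1 - r) • x + r • z) :=
      hmin (hφ.1 hx hz (sub_nonneg.2 hr1.le) hr0.le (sub_add_cancel 1 r))
    simp only [smul_eq_mul, norm_sub_rev x z] at hmid
    have : r * (φ x + (1 - r) * (m / 2 * ‖z - x‖ ^ 2)) ≤ r * φ z := by linarith [hle.trans hmid]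
    exact le_of_mul_le_mul_left this hr0
  have hlim : Tendsto (fun r : ℝ => φ x + (1 - r) * (m / 2 * ‖z - x‖ ^ 2)) (𝓝[>] 0)
      (𝓝 (φ x + m / 2 * ‖z - x‖ ^ 2)) := by
    refine tendsto_nhdsWithin_of_tendsto_nhds (Continuous.tendsto' ?_ 0 _ ?_)
    · fun_prop
    · simp
  refine le_of_tendsto hlim ?_
  filter_upwards [Ioo_mem_nhdsGT one_pos] with r hr using hsegment r hr

theorem ConvexOn.strongConvexOn_inner_add_sq_add {s : Set E} {G : E → ℝ} (hG : ConvexOn ℝ s G)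
    (v y : E) (L : ℝ) :
    StrongConvexOn s L (fun z => ⟪v, z - y⟫ + L / 2 * ‖z - y‖ ^ 2 + G z) := by
  rw [strongConvexOn_iff_convex]
  have haffine : ConvexOn ℝ s fun z => ⟪v - L • y, z⟫ + (L / 2 * ‖y‖ ^ 2 - ⟪v, y⟫) :=
    ((innerₛₗ ℝ (v - L • y)).convexOn hG.1).add_const _
  refine (hG.add haffine).congr fun z _ => ?_
  simp only [Pi.add_apply, norm_sub_sq_real, inner_sub_left, inner_sub_right, real_inner_smul_left,
    real_inner_comm y z]
  ring

theorem add_le_add_add_sq_sub_sq_of_isMinOn [CompleteSpace E] {f G : E → ℝ} {f' : E → E}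
    {L : ℝ} {s : Set E} {x y z : E} (hf : ∀ x, HasGradientAt f (f' x) x)
    (hfconv : ConvexOn ℝ univ f) (hlip : ∀ x y, ‖f' x - f' y‖ ≤ L * ‖x - y‖)
    (hG : ConvexOn ℝ s G) (hx : x ∈ s)
    (hmin : IsMinOn (fun w => ⟪f' y, w - y⟫ + L / 2 * ‖w - y‖ ^ 2 + G w) s x) (hz : z ∈ s) :
    f x + G x ≤ f z + G z + L / 2 * (‖z - y‖ ^ 2 - ‖z - x‖ ^ 2) := by
  have hdescent := le_add_inner_gradient_add_sq hf hlip y x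
  have hlinear := hfconv.add_inner_gradient_le (mem_univ y) (mem_univ z) (hf y)
  have hgrowth := (hG.strongConvexOn_inner_add_sq_add (f' y) y L).add_sq_le_of_isMinOn hmin hx hz
  linarith

theorem weighted_sq_norm_sub_sq_norm (s : ℝ) (a b p q : E) :
    s * (s - 1) * (‖a - p‖ ^ 2 - ‖a - q‖ ^ 2) + s * (‖b - p‖ ^ 2 - ‖b - q‖ ^ 2) =
      ‖s • p - (s - 1) • a - b‖ ^ 2 - ‖s • q - (s - 1) • a - b‖ ^ 2 := by
  simp only [← real_inner_self_eq_norm_sq, inner_sub_left, inner_sub_right, real_inner_smul_left,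
    real_inner_smul_right, real_inner_comm a p, real_inner_comm a q, real_inner_comm b p,
    real_inner_comm b q, real_inner_comm a b]
  ring

-- Beck–Teboulle's Lyapunov function, with `τ = t_{k-1}`, `u = x_{k-1}`, `v = x_k`.
noncomputable def fistaEnergy (F : E → ℝ) (L : ℝ) (xstar : E) (τ : ℝ) (u v : E) : ℝ :=
  2 / L * τ ^ 2 * (F v - F xstar) + ‖τ • v - (τ - 1) • u - xstar‖ ^ 2

theorem fistaEnergy_le_of_step {F : E → ℝ} {L s τ : ℝ} {xstar u x₁ x₂ y : E} (hL : 0 < L)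
    (hs : 1 ≤ s) (hτ : s ^ 2 - s = τ ^ 2) (hy : s • y - (s - 1) • x₁ = τ • x₁ - (τ - 1) • u)
    (hprev : F x₂ ≤ F x₁ + L / 2 * (‖x₁ - y‖ ^ 2 - ‖x₁ - x₂‖ ^ 2))
    (hstar : F x₂ ≤ F xstar + L / 2 * (‖xstar - y‖ ^ 2 - ‖xstar - x₂‖ ^ 2)) :
    fistaEnergy F L xstar s x₁ x₂ ≤ fistaEnergy F L xstar τ u x₁ := by
  have hcomb : s ^ 2 * (F x₂ - F xstar) ≤ τ ^ 2 * (F x₁ - F xstar) +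
      L / 2 * (s * (s - 1) * (‖x₁ - y‖ ^ 2 - ‖x₁ - x₂‖ ^ 2) +
        s * (‖xstar - y‖ ^ 2 - ‖xstar - x₂‖ ^ 2)) := by
    rw [← hτ]
    nlinarith [mul_le_mul_of_nonneg_left hprev (by nlinarith : 0 ≤ s * (s - 1)),
      mul_le_mul_of_nonneg_left hstar (by linarith : 0 ≤ s)]
  rw [weighted_sq_norm_sub_sq_norm, hy] at hcomb
  unfold fistaEnergy
  have := mul_le_mul_of_nonneg_left hcomb (by positivity : 0 ≤ 2 / L)
  field_simp at this ⊢
  linarith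

theorem fista_rate {F : E → ℝ} {L : ℝ} {t : ℕ → ℝ} {x y : ℕ → E} {xstar : E} {s : Set E}
    (hL : 0 < L) (ht0 : t 0 = 1) (htrec : ∀ k, t (k + 1) = (1 + √(1 + 4 * t k ^ 2)) / 2)
    (hy1 : y 1 = x 0)
    (hextra : ∀ k, y (k + 2) = x (k + 1) + ((t k - 1) / t (k + 1)) • (x (k + 1) - x k))
    (hxs : ∀ k, x (k + 1) ∈ s) (hstar : xstar ∈ s) (hmin : IsMinOn F s xstar)
    (hstep : ∀ k, ∀ z ∈ s,
      F (x (k + 1)) ≤ F z + L / 2 * (‖z - y (k + 1)‖ ^ 2 - ‖z - x (k + 1)‖ ^ 2))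
    (k : ℕ) :
    F (x (k + 1)) ≤ F xstar + 2 * L * ‖x 0 - xstar‖ ^ 2 / ((k : ℝ) + 2) ^ 2 := by
  have ht := add_two_div_two_le_momentum ht0 htrec
  have hinit : fistaEnergy F L xstar (t 0) (x 0) (x 1) ≤ ‖x 0 - xstar‖ ^ 2 := by
    have h := hstep 0 xstar hstar
    rw [hy1, norm_sub_rev xstar, norm_sub_rev xstar] at h
    simp only [fistaEnergy, ht0, one_pow, mul_one, sub_self, zero_smul, one_smul, sub_zero]
    field_simp
    linarith
  have hdecr (k : ℕ) : fistaEnergy F L xstar (t (k + 1)) (x (k + 1)) (x (k + 2)) ≤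
      fistaEnergy F L xstar (t k) (x k) (x (k + 1)) := by
    have hs : 1 ≤ t (k + 1) :=
      le_trans (by push_cast; linarith [k.cast_nonneg (α := ℝ)]) (ht (k + 1))
    refine fistaEnergy_le_of_step hL hs (momentum_succ_sq_sub_self htrec k) ?_
      (hstep (k + 1) _ (hxs k)) (hstep (k + 1) xstar hstar)
    rw [hextra, smul_add, smul_smul, mul_div_cancel₀ _ (by linarith)]
    module
  have hbound (k : ℕ) : fistaEnergy F L xstar (t k) (x k) (x (k + 1)) ≤ ‖x 0 - xstar‖ ^ 2 := by
    induction k with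
    | zero => exact hinit
    | succ k ih => exact (hdecr k).trans ih
  have hgap : 0 ≤ F (x (k + 1)) - F xstar := sub_nonneg.2 (hmin (hxs k))
  have hk : 2 / L * t k ^ 2 * (F (x (k + 1)) - F xstar) ≤ ‖x 0 - xstar‖ ^ 2 :=
    (le_add_of_nonneg_right (sq_nonneg _)).trans (hbound k)
  have htk := pow_le_pow_left₀ (by positivity) (ht k) 2
  rw [← sub_le_iff_le_add', le_div_iff₀ (by positivity)]
  field_simp at hk htk
  nlinarith [mul_le_mul_of_nonneg_right htk hgap]

end InnerProductSpace

theorem fista_convergence {n : ℕ}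
    (f : EuclideanSpace ℝ (Fin n) → ℝ) (f' : EuclideanSpace ℝ (Fin n) → EuclideanSpace ℝ (Fin n))
    (hf : ∀ x, HasGradientAt f (f' x) x)
    (hfconv : ConvexOn ℝ Set.univ f)
    (L : ℝ) (hL : 0 < L)
    (hlip : ∀ x y, ‖f' x - f' y‖ ≤ L * ‖x - y‖)
    (g : EuclideanSpace ℝ (Fin n) → EReal)
    -- `g` is proper:
    (hg_ne_bot : ∀ x, g x ≠ ⊥)
    -- `g` is convex:
    (hg_conv : ∀ x y, ∀ a b : ℝ, 0 ≤ a → 0 ≤ b → a + b = 1 →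
      g (a • x + b • y) ≤ (a : EReal) * g x + (b : EReal) * g y)
    -- `F = f + g` attains its minimum at `xstar`
    (xstar : EuclideanSpace ℝ (Fin n))
    (hstar : ∀ x, (f xstar : EReal) + g xstar ≤ (f x : EReal) + g x)
    -- momentum coefficients
    (t : ℕ → ℝ) (ht0 : t 0 = 1)
    (htrec : ∀ k : ℕ, 1 ≤ k → t k = (1 + Real.sqrt (1 + 4 * t (k - 1) ^ 2)) / 2)
    -- iterates
    (x y : ℕ → EuclideanSpace ℝ (Fin n))
    (hy1 : y 1 = x 0)
    -- proximal gradient step with stepsize `1/L`: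
    -- `x_k = argmin_x ⟨∇f(y_k), x - y_k⟩ + (L/2)‖x - y_k‖² + g(x)`
    (hprox : ∀ k : ℕ, 1 ≤ k → ∀ z,
      ((⟪f' (y k), x k - y k⟫ + L / 2 * ‖x k - y k‖ ^ 2 : ℝ) : EReal) + g (x k) ≤
        ((⟪f' (y k), z - y k⟫ + L / 2 * ‖z - y k‖ ^ 2 : ℝ) : EReal) + g z)
    -- extrapolation step
    (hextra : ∀ k : ℕ, 1 ≤ k →
      y (k + 1) = x k + ((t (k - 1) - 1) / t k) • (x k - x (k - 1))) :
    ∀ k : ℕ, 1 ≤ k →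
      (f (x k) : EReal) + g (x k) ≤
        ((f xstar : EReal) + g xstar) +
          ((2 * L * ‖x 0 - xstar‖ ^ 2 / ((k : ℝ) + 1) ^ 2 : ℝ) : EReal) := by
  intro k hk
  by_cases hgstar : g xstar = ⊤
  · simp [hgstar]
  set s := {z | g z ≠ ⊤}
  set G := fun z => (g z).toReal
  have hcoe : ∀ z ∈ s, ∀ a : ℝ, (a : EReal) + g z = ((a + G z : ℝ) : EReal) := fun z hz a => by
    rw [EReal.coe_add, EReal.coe_toReal hz (hg_ne_bot z)]
  have hxs : ∀ k, 1 ≤ k → x k ∈ s := fun k hk hxk => by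
    have h := hprox k hk xstar
    rw [hcoe _ hgstar, hxk, EReal.coe_add_top, top_le_iff] at h
    exact EReal.coe_ne_top _ h
  have hstep : ∀ k, 1 ≤ k → ∀ z ∈ s,
      f (x k) + G (x k) ≤ f z + G z + L / 2 * (‖z - y k‖ ^ 2 - ‖z - x k‖ ^ 2) := by
    refine fun k hk z hz => add_le_add_add_sq_sub_sq_of_isMinOn hf hfconv hlip
      (convexOn_toReal_of_ne_bot hg_ne_bot hg_conv) (hxs k hk) (fun w hw => ?_) hz
    have h := hprox k hk w
    rwa [hcoe _ (hxs k hk), hcoe w hw, EReal.coe_le_coe_iff] at h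
  have hmin : IsMinOn (fun z => f z + G z) s xstar := fun z hz => by
    have h := hstar z
    rwa [hcoe _ hgstar, hcoe z hz, EReal.coe_le_coe_iff] at h
  obtain ⟨m, rfl⟩ := Nat.exists_eq_add_of_le' hk
  have hrate := fista_rate (F := fun z => f z + G z) hL ht0
    (fun k => by simpa using htrec (k + 1) k.succ_pos) hy1
    (fun k => by simpa using hextra (k + 1) k.succ_pos) (fun k => hxs _ k.succ_pos) hgstar hmin
    (fun k => hstep _ k.succ_pos) m
  have hm : ((m + 1 : ℕ) : ℝ) + 1 = m + 2 := by push_cast; ring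
  rw [hm, hcoe _ (hxs _ hk), hcoe _ hgstar, ← EReal.coe_add, EReal.coe_le_coe_iff]
  exact hrate
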